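/- arXiv:2304.02331 — 2 statements merged into one kernel-verified Lean document; each statement's English description precedes it below -/
import Mathlib

section
/- Let Cl(n,1) be the Clifford algebra of Minkowski space ℝ^{n,1}, W a Cl(n,1)-module equipped with a positive definite inner product such that Clifford multiplication by spacelike unit vectors is skew-adjoint and by the timelike unit vector e₀ is self-adjoint. For φ ∈ W define the Dirac current V_φ ∈ ℝ^{n,1} by ⟨V_φ, X⟩_{Mink} = −⟨e₀·X·φ, φ⟩ for all X. Then |V_φ · φ|² = −⟨V_φ, V_φ⟩_{Mink} · |φ|². -/
open scoped RealInnerProductSpace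

/-- The Minkowski bilinear form of signature (n,1) on ℝ^{n,1} = ℝⁿ ⊕ ℝe₀. -/
noncomputable def mink {n : ℕ} (v w : EuclideanSpace ℝ (Fin n) × ℝ) : ℝ :=
  ⟪v.1, w.1⟫ - v.2 * w.2

/-- The future unit timelike vector e₀. -/
noncomputable def e0 (n : ℕ) : EuclideanSpace ℝ (Fin n) × ℝ := (0, 1)

/-!
Split `V_φ = x + t e₀` with `x` spacelike. Testing the defining identity of `V_φ` against `e₀`
gives `t = |φ|²`, and against `x` gives `⟨x·φ, e₀·φ⟩ = -|x|²`. Since `e₀·` is an isometry and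
`|x·φ|² = |x|²|φ|²` (skew-adjointness plus the Clifford relation), expanding `|x·φ + t e₀·φ|²`
yields `|x|²t - 2t|x|² + t³ = -(|x|² - t²)|φ|²`.
-/

section Minkowski

variable {n : ℕ}

theorem mink_e0_self : mink (e0 n) (e0 n) = -1 := by
  simp [mink, e0]

theorem mink_e0_right (v : EuclideanSpace ℝ (Fin n) × ℝ) : mink v (e0 n) = -v.2 := by
  simp [mink, e0]

theorem mink_spacelike_right (v : EuclideanSpace ℝ (Fin n) × ℝ) (x : EuclideanSpace ℝ (Fin n)) :
    mink v (x, 0) = ⟪v.1, x⟫ := by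
  simp [mink]

theorem mink_self (v : EuclideanSpace ℝ (Fin n) × ℝ) : mink v v = ‖v.1‖ ^ 2 - v.2 ^ 2 := by
  rw [mink, real_inner_self_eq_norm_sq]
  ring

theorem eq_spacelike_add_smul_e0 (v : EuclideanSpace ℝ (Fin n) × ℝ) :
    v = (v.1, 0) + v.2 • e0 n := by
  ext <;> simp [e0]

end Minkowski

section CliffordModule

variable {n : ℕ} {W : Type*} [NormedAddCommGroup W] [InnerProductSpace ℝ W]
  {cm : (EuclideanSpace ℝ (Fin n) × ℝ) →ₗ[ℝ] Module.End ℝ W}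

theorem e0_mul_e0_mul (hcl : ∀ v (ψ : W), cm v (cm v ψ) = -(mink v v) • ψ) (ψ : W) :
    cm (e0 n) (cm (e0 n) ψ) = ψ := by
  rw [hcl, mink_e0_self, neg_neg, one_smul]

theorem norm_e0_mul (hcl : ∀ v (ψ : W), cm v (cm v ψ) = -(mink v v) • ψ)
    (he0 : ∀ ψ χ : W, ⟪cm (e0 n) ψ, χ⟫ = ⟪ψ, cm (e0 n) χ⟫) (ψ : W) :
    ‖cm (e0 n) ψ‖ = ‖ψ‖ := by
  rw [norm_eq_sqrt_real_inner, he0, e0_mul_e0_mul hcl, ← norm_eq_sqrt_real_inner]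

theorem norm_sq_spacelike_mul (hcl : ∀ v (ψ : W), cm v (cm v ψ) = -(mink v v) • ψ)
    (hsp : ∀ (x : EuclideanSpace ℝ (Fin n)) (ψ χ : W),
      ⟪cm (x, (0:ℝ)) ψ, χ⟫ = -⟪ψ, cm (x, (0:ℝ)) χ⟫)
    (x : EuclideanSpace ℝ (Fin n)) (ψ : W) :
    ‖cm (x, 0) ψ‖ ^ 2 = ‖x‖ ^ 2 * ‖ψ‖ ^ 2 := by
  rw [← real_inner_self_eq_norm_sq, hsp, hcl, mink_spacelike_right, real_inner_smul_right,
    real_inner_self_eq_norm_sq, real_inner_self_eq_norm_sq]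
  ring

variable {φ : W} {Vφ : EuclideanSpace ℝ (Fin n) × ℝ}

theorem diracCurrent_snd (hcl : ∀ v (ψ : W), cm v (cm v ψ) = -(mink v v) • ψ)
    (hV : ∀ X, mink Vφ X = -⟪cm (e0 n) (cm X φ), φ⟫) :
    Vφ.2 = ‖φ‖ ^ 2 := by
  have h := hV (e0 n)
  rwa [mink_e0_right, e0_mul_e0_mul hcl, real_inner_self_eq_norm_sq, neg_inj] at h

theorem inner_spacelike_mul_e0_mul (he0 : ∀ ψ χ : W, ⟪cm (e0 n) ψ, χ⟫ = ⟪ψ, cm (e0 n) χ⟫)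
    (hV : ∀ X, mink Vφ X = -⟪cm (e0 n) (cm X φ), φ⟫) (x : EuclideanSpace ℝ (Fin n)) :
    ⟪cm (x, 0) φ, cm (e0 n) φ⟫ = -⟪Vφ.1, x⟫ := by
  rw [← he0, ← mink_spacelike_right, hV, neg_neg]

end CliffordModule

/-- for the Dirac current V_φ of a spinor φ in a Cl(n,1)-module with
compatible positive definite inner product, |V_φ · φ|² = −⟨V_φ,V_φ⟩·|φ|². -/
theorem dirac_current_clifford_norm (n : ℕ) (W : Type*) [NormedAddCommGroup W]
    [InnerProductSpace ℝ W]
    (cm : (EuclideanSpace ℝ (Fin n) × ℝ) →ₗ[ℝ] Module.End ℝ W)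
    -- Clifford relation v·v·φ = −⟨v,v⟩φ
    (hcl : ∀ v (ψ : W), cm v (cm v ψ) = -(mink v v) • ψ)
    -- e₀· is self-adjoint
    (he0 : ∀ ψ χ : W, ⟪cm (e0 n) ψ, χ⟫ = ⟪ψ, cm (e0 n) χ⟫)
    -- Clifford multiplication by spacelike vectors is skew-adjoint
    (hsp : ∀ (x : EuclideanSpace ℝ (Fin n)) (ψ χ : W),
      ⟪cm (x, (0:ℝ)) ψ, χ⟫ = -⟪ψ, cm (x, (0:ℝ)) χ⟫)
    (φ : W) (Vφ : EuclideanSpace ℝ (Fin n) × ℝ)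
    -- defining property of the Dirac current
    (hV : ∀ X, mink Vφ X = -⟪cm (e0 n) (cm X φ), φ⟫) :
    ‖cm Vφ φ‖ ^ 2 = -(mink Vφ Vφ) * ‖φ‖ ^ 2 := by
  have hsplit : cm Vφ φ = cm (Vφ.1, 0) φ + Vφ.2 • cm (e0 n) φ := by
    conv_lhs => rw [eq_spacelike_add_smul_e0 Vφ]
    simp only [map_add, map_smul, LinearMap.add_apply, LinearMap.smul_apply]
  rw [hsplit, norm_add_sq_real, real_inner_smul_right, norm_smul, mul_pow,
    norm_sq_spacelike_mul hcl hsp, norm_e0_mul hcl he0, inner_spacelike_mul_e0_mul he0 hV,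
    real_inner_self_eq_norm_sq, Real.norm_eq_abs, sq_abs, mink_self, diracCurrent_snd hcl hV]
  ring
end

section
/- In the setting of the previous computation (k = −(h∘s)g with h' ≤ 0 and |ds|_g ≤ 1), the dominant energy condition ρ ≥ |j|_g is implied by the scalar curvature bound scal_g ≥ −n(n−1)(h∘s)² − 2(n−1)(h'∘s). -/
theorem abs_mul_le_neg_of_nonpos_of_le_one {a d : ℝ} (ha : a ≤ 0) (hd : d ≤ 1) :
    |a| * d ≤ -a := by
  rw [abs_of_nonpos ha]
  nlinarith

theorem dominant_energy_of_scal_ge {n scal h h' d : ℝ} (hn : 1 ≤ n) (hh' : h' ≤ 0) (hd : d ≤ 1)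
    (hscal : scal ≥ -n * (n - 1) * h ^ 2 - 2 * (n - 1) * h') :
    (n - 1) * |h'| * d ≤ 1 / 2 * (scal + n * (n - 1) * h ^ 2) :=
  calc (n - 1) * |h'| * d = (n - 1) * (|h'| * d) := mul_assoc _ _ _
    _ ≤ (n - 1) * -h' :=
      mul_le_mul_of_nonneg_left (abs_mul_le_neg_of_nonpos_of_le_one hh' hd) (by linarith)
    _ ≤ 1 / 2 * (scal + n * (n - 1) * h ^ 2) := by linarith

theorem dec_of_scalar_curvature_bound_general (n : ℕ) (hn : 2 ≤ n) (M : Type*)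
    (scal hs hs' dsnorm : M → ℝ)
    (hh' : ∀ p, hs' p ≤ 0)
    (hds1 : ∀ p, dsnorm p ≤ 1)
    (ρ : M → ℝ) (hρ : ∀ p, ρ p = (1/2) * (scal p + (n : ℝ) * ((n : ℝ) - 1) * (hs p) ^ 2))
    (jnorm : M → ℝ) (hj : ∀ p, jnorm p = ((n : ℝ) - 1) * |hs' p| * dsnorm p)
    (hscal : ∀ p, scal p ≥ -(n : ℝ) * ((n : ℝ) - 1) * (hs p) ^ 2 - 2 * ((n : ℝ) - 1) * hs' p) :
    ∀ p, ρ p ≥ jnorm p := by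
  intro p
  have hn1 : (1 : ℝ) ≤ n := by exact_mod_cast one_le_two.trans hn
  rw [hρ, hj]
  exact dominant_energy_of_scal_ge hn1 (hh' p) (hds1 p) (hscal p)

/-- pointwise formulation: for k = −(h∘s)g with h' ≤ 0 and |ds|_g ≤ 1,
the scalar curvature bound scal ≥ −n(n−1)(h∘s)² − 2(n−1)(h'∘s) implies the dominant
energy condition ρ ≥ |j|_g, where ρ = ½(scal + n(n−1)(h∘s)²) and
|j|_g = (n−1)|h'∘s|·|ds|_g. -/
theorem dec_of_scalar_curvature_bound (n : ℕ) (hn : 2 ≤ n) (M : Type*)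
    (scal hs hs' dsnorm : M → ℝ)
    (hh' : ∀ p, hs' p ≤ 0)
    (hds0 : ∀ p, 0 ≤ dsnorm p) (hds1 : ∀ p, dsnorm p ≤ 1)
    (ρ : M → ℝ) (hρ : ∀ p, ρ p = (1/2) * (scal p + (n : ℝ) * ((n : ℝ) - 1) * (hs p) ^ 2))
    (jnorm : M → ℝ) (hj : ∀ p, jnorm p = ((n : ℝ) - 1) * |hs' p| * dsnorm p)
    (hscal : ∀ p, scal p ≥ -(n : ℝ) * ((n : ℝ) - 1) * (hs p) ^ 2 - 2 * ((n : ℝ) - 1) * hs' p) :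
    ∀ p, ρ p ≥ jnorm p :=
  dec_of_scalar_curvature_bound_general n hn M scal hs hs' dsnorm hh' hds1 ρ hρ jnorm hj hscal
end
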